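/- Let V be a nonempty string over Σ_$, and let j = (position of the first occurrence of $ in V) − 1 if V contains at least one $, and j = |V| otherwise. Then the sum of the (integer) entries rtsenc(V)[1] + rtsenc(V)[2] + ⋯ + rtsenc(V)[j] is at most |V|. -/

import Mathlib

open Classical

/-- Unlabeled binary trees, representing the shapes of Cartesian trees
(Cartesian tree matching compares tree structure). -/
inductive CTree : Type where
  | leaf : CTree
  | node : CTree → CTree → CTree
  deriving DecidableEq

noncomputable section

/-- The alphabet `Σ_$`: the integer alphabet `Σ = {0,…,σ}` together with the
special symbol `$ = ⊥`, which is smaller than every symbol of `Σ`. -/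
abbrev Sig (σ : ℕ) := WithBot (Fin (σ + 1))

/-- The encoding alphabet `Σ_$ ∪ ℕ ∪ {∞}`: `$ = ⊥`, naturals, and `∞ = ⊤`. -/
abbrev Enc := WithBot (WithTop ℕ)

/-- The symbol `∞`, larger than every integer. -/
def infE : Enc := ((⊤ : WithTop ℕ) : Enc)

variable {σ : ℕ}

/-- 1-based access, defaulting to `$`. -/
def get1 (V : List (Sig σ)) (i : ℕ) : Sig σ := V.getD (i - 1) ⊥

/-- Parent distance encoding: entry at 1-based position `i`:
`∞` if `$ ≠ V[i] < V[j]` for all `j < i`; `$` if `V[i] = $`;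
otherwise `i − max{ j ∈ [1..i−1] : V[j] < V[i] }`. -/
def pdEntry (V : List (Sig σ)) (i : ℕ) : Enc :=
  if get1 V i = ⊥ then ⊥
  else if ∀ j, 1 ≤ j → j < i → get1 V i < get1 V j then infE
  else (((i - Nat.findGreatest (fun j => 1 ≤ j ∧ get1 V j < get1 V i) (i - 1) : ℕ) : WithTop ℕ) : Enc)

/-- The parent distance encoding `pd(V)`. -/
def pd (V : List (Sig σ)) : List Enc := (List.range V.length).map fun k => pdEntry V (k + 1)

/-- 0-based position of the leftmost minimum symbol. -/
def minPos (V : List (Sig σ)) : ℕ := V.findIdx fun c => V.all fun d => decide (c ≤ d)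

def ctAux : ℕ → List (Sig σ) → CTree
  | 0, _ => .leaf
  | fuel + 1, V =>
    if V.isEmpty then .leaf
    else .node (ctAux fuel (V.take (minPos V))) (ctAux fuel (V.drop (minPos V + 1)))

/-- The Cartesian tree `CT(V)`: root at the position of the smallest symbol
(ties broken towards the smallest position), recursing on both sides. -/
def ct (V : List (Sig σ)) : CTree := ctAux V.length V

/-- Cartesian tree matching: `U ≈ V` iff `CT(U) = CT(V)`. -/
def CtMatch (U V : List (Sig σ)) : Prop := ct U = ct V

/-- `k`-fold concatenation `Y^k`. -/
def listPow {α : Type*} : List α → ℕ → List α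
  | _, 0 => []
  | Y, k + 1 => Y ++ listPow Y k

/-- A string is primitive if `X = Y^k` implies `Y = X` and `k = 1`. -/
def Primitive {α : Type*} (X : List α) : Prop := ∀ Y k, X = listPow Y k → Y = X ∧ k = 1

/-- The primitive root `root(U)` of a string. -/
def proot {α : Type*} (U : List α) : List α :=
  if h : ∃ Y, Primitive Y ∧ ∃ k, 1 ≤ k ∧ U = listPow Y k then h.choose else U

/-- `V^ω[..i]`, the length-`i` prefix of the infinite self-concatenation of `V`. -/
def wpre {α : Type*} (V : List α) (i : ℕ) : List α := (listPow V i).take i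

/-- One left rotation. -/
def rotOne {α : Type*} (V : List α) : List α := V.drop 1 ++ V.take 1

/-- `rot(V,k)`, the `k`-th left rotation of `V`. -/
def rot {α : Type*} (V : List α) (k : ℕ) : List α := rotOne^[k] V

/-- Rotational parent distance encoding: `rpd(V) = pd(V·V)[|V|+1..]`. -/
def rpd (V : List (Sig σ)) : List Enc := (pd (V ++ V)).drop V.length

/-- The ω-preorder: `V ⪯ω U` iff there is `i` with `pd(V^ω[..i]) < pd(U^ω[..i])`
(lexicographically, with a proper prefix smaller), or `root(rpd V) = root(rpd U)`. -/
def omegaLe (V U : List (Sig σ)) : Prop :=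
  (∃ i : ℕ, List.Lex (· < ·) (pd (wpre V i)) (pd (wpre U i))) ∨ proot (rpd V) = proot (rpd U)

/-- `V =ω U`. -/
def omegaEq (V U : List (Sig σ)) : Prop := omegaLe V U ∧ omegaLe U V

/-- `V ≺ω U`. -/
def omegaLt (V U : List (Sig σ)) : Prop := omegaLe V U ∧ ¬ omegaEq V U

/-- Entry of the rotational Cartesian tree signature encoding at 1-based position `i`. -/
def rtsEntry (V : List (Sig σ)) (i : ℕ) : WithBot ℕ :=
  if get1 V i = ⊥ then ⊥
  else (((pd (rot V i)).count infE - ((pd (get1 V i :: rot V i)).drop 1).count infE : ℕ) : WithBot ℕ)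

/-- The rotational Cartesian tree signature encoding `rtsenc(V)`. -/
def rtsenc (V : List (Sig σ)) : List (WithBot ℕ) :=
  (List.range V.length).map fun k => rtsEntry V (k + 1)

/-- `π(V) = rtsenc(V)[1]`. -/
def piF (V : List (Sig σ)) : WithBot ℕ := (rtsenc V).getD 0 ⊥

/-- Length of the longest common prefix of two strings. -/
def lcpLen {α : Type*} [DecidableEq α] : List α → List α → ℕ
  | a :: as, b :: bs => if a = b then lcpLen as bs + 1 else 0
  | _, _ => 0

/-- `lcp∞(U,W)`: the number of occurrences of `∞` among the first `ℓ` symbols of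
`pd(U)`, where `ℓ` is the length of the longest common prefix of `pd U` and `pd W`. -/
def lcpInf (U W : List (Sig σ)) : ℕ := ((pd U).take (lcpLen (pd U) (pd W))).count infE

/-- Total length `n = |T_1 ⋯ T_d|` of all texts. -/
def totLen (Ts : List (List (Sig σ))) : ℕ := (Ts.map List.length).sum

/-- `conj_𝒯(i)` for `i ∈ [1..n]`: with `j = min{h : n_1+⋯+n_h ≥ i}`,
the rotation `rot(T_j, i − 1 − (n_1+⋯+n_{j−1}))`. -/
def conjAt : List (List (Sig σ)) → ℕ → List (Sig σ)
  | [], _ => []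
  | T :: Ts, i => if i ≤ T.length then rot T (i - 1) else conjAt Ts (i - T.length)

/-- The text `T_j` containing global position `i`. -/
def textAt : List (List (Sig σ)) → ℕ → List (Sig σ)
  | [], _ => []
  | T :: Ts, i => if i ≤ T.length then T else textAt Ts (i - T.length)

/-- `prev_𝒯(i)`. -/
def prevT (Ts : List (List (Sig σ))) (i : ℕ) : ℕ :=
  if omegaEq (conjAt Ts i) (textAt Ts i) then i - 1 + (proot (rpd (textAt Ts i))).length
  else i - 1

/-- `CA` is the conjugate array of the texts `Ts`: a permutation of `[1..n]` with
`CA[i] = j` iff `i − 1` equals the number of `k ∈ [1..n]` with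
`conj(k) ≺ω conj(j)`, or `conj(k) =ω conj(j)` and `k < j`. -/
def IsCA (Ts : List (List (Sig σ))) (CA : ℕ → ℕ) : Prop :=
  Set.BijOn CA (Set.Icc 1 (totLen Ts)) (Set.Icc 1 (totLen Ts)) ∧
  ∀ i ∈ Set.Icc 1 (totLen Ts), ∀ j ∈ Set.Icc 1 (totLen Ts),
    (CA i = j ↔ i - 1 = Set.ncard {k | k ∈ Set.Icc 1 (totLen Ts) ∧
      (omegaLt (conjAt Ts k) (conjAt Ts j) ∨ (omegaEq (conjAt Ts k) (conjAt Ts j) ∧ k < j))})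

/-- The conjugate range of `P`: positions `i ∈ [1..n]` with
`P ≈ conj(CA[i])^ω[..|P|]`. -/
def crange (Ts : List (List (Sig σ))) (CA : ℕ → ℕ) (P : List (Sig σ)) : Set ℕ :=
  {i | i ∈ Set.Icc 1 (totLen Ts) ∧ CtMatch P (wpre (conjAt Ts (CA i)) P.length)}

/-- `rank_c(V, j)`: number of occurrences of `c` in `V[..j]`. -/
def rankQ {α : Type*} [DecidableEq α] (c : α) (V : List α) (j : ℕ) : ℕ := (V.take j).count c

/-- `select_c(V, i)`: 1-based position of the `i`-th occurrence of `c` in `V`. -/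
def selectQ {α : Type*} [DecidableEq α] (c : α) (V : List α) (i : ℕ) : ℕ :=
  ((List.range V.length).findIdx fun k => (V.take (k + 1)).count c == i) + 1

end

/-!
Write `c(W)` for the number of `∞` entries of `pd(W)`, i.e. the number of strict prefix minima
of `W` (none if `W` starts with `$`). Let `a = V[i] ≠ $` and `rot(V,i-1) = a·t`, so that
`rot(V,i) = t·a` and `V[i]·rot(V,i) = a·t·a`. The last entry of `pd(a·t·a)` is not `∞`, its
first entry is `∞`, and deleting the first symbol of a string cannot create new prefix minima.
Hence `rtsenc(V)[i] = c(rot(V,i)) - c(rot(V,i-1)) + 1` with no truncation, and the sum up to `j`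
telescopes to `c(rot(V,j)) - c(V) + j ≤ j`: either `j = |V|` and `rot(V,j) = V`, or `rot(V,j)`
starts with `$` and `c(rot(V,j)) = 0`.
-/

open List

lemma rot_eq_rotate {α : Type*} (V : List α) (k : ℕ) : rot V k = V.rotate k := by
  induction k with
  | zero => exact (rotate_zero V).symm
  | succ k ih =>
    rw [rot, Function.iterate_succ_apply', ← rot, ih, ← rotate_rotate]
    rcases V.rotate k with _ | ⟨a, t⟩ <;> simp [rotOne]

namespace List

lemma rotate_eq_getElem_cons {α : Type*} {V : List α} {k : ℕ} (hk : k < V.length) :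
    ∃ t, V.rotate k = V[k] :: t ∧ V.rotate (k + 1) = t ++ [V[k]] := by
  obtain ⟨t, ht⟩ := head?_eq_some_iff.1 ((head?_rotate hk).trans (getElem?_eq_getElem hk))
  exact ⟨t, ht, by rw [← rotate_rotate, ht, rotate_cons_succ, rotate_zero]⟩

lemma getElem_ne_of_lt_idxOf {α : Type*} [BEq α] [LawfulBEq α] {l : List α} {a : α} {k : ℕ}
    (hk : k < l.idxOf a) : l[k]'(hk.trans_le idxOf_le_length) ≠ a := by
  simpa using not_of_lt_findIdx hk

end List

section Encodings

variable {σ : ℕ}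

lemma get1_cons_add_two (a : Sig σ) (W : List (Sig σ)) (k : ℕ) :
    get1 (a :: W) (k + 2) = get1 W (k + 1) := by
  simp [get1]

lemma get1_append_of_lt {U : List (Sig σ)} (T : List (Sig σ)) {k : ℕ} (hk : k < U.length) :
    get1 (U ++ T) (k + 1) = get1 U (k + 1) := by
  simp [get1, getElem?_append_left hk]

lemma pdEntry_eq_infE_iff (W : List (Sig σ)) (i : ℕ) :
    pdEntry W i = infE ↔ get1 W i ≠ ⊥ ∧ ∀ j, 1 ≤ j → j < i → get1 W i < get1 W j := by
  unfold pdEntry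
  split_ifs with hbot hmin <;> simp_all [infE]

lemma pdEntry_append_eq_infE_iff {U : List (Sig σ)} (T : List (Sig σ)) {k : ℕ}
    (hk : k < U.length) : pdEntry (U ++ T) (k + 1) = infE ↔ pdEntry U (k + 1) = infE := by
  have hget : ∀ j, 1 ≤ j → j ≤ k + 1 → get1 (U ++ T) j = get1 U j := fun j hj hjk => by
    obtain ⟨j, rfl⟩ := Nat.exists_eq_add_of_le' hj
    exact get1_append_of_lt T (by omega)
  rw [pdEntry_eq_infE_iff, pdEntry_eq_infE_iff, hget (k + 1) (by omega) le_rfl]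
  refine and_congr_right fun _ => forall₂_congr fun j hj => ?_
  exact imp_congr_right fun hjk => by rw [hget j hj hjk.le]

lemma pdEntry_cons_add_two_eq_infE {a : Sig σ} {W : List (Sig σ)} {k : ℕ}
    (h : pdEntry (a :: W) (k + 2) = infE) : pdEntry W (k + 1) = infE := by
  rw [pdEntry_eq_infE_iff, get1_cons_add_two] at h
  rw [pdEntry_eq_infE_iff]
  refine ⟨h.1, fun j hj hjk => ?_⟩
  obtain ⟨j, rfl⟩ := Nat.exists_eq_add_of_le' hj
  simpa only [get1_cons_add_two] using h.2 (j + 2) (by omega) (by omega)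

lemma pdEntry_cons_one {a : Sig σ} (ha : a ≠ ⊥) (W : List (Sig σ)) :
    pdEntry (a :: W) 1 = infE :=
  (pdEntry_eq_infE_iff _ _).2 ⟨by simpa [get1] using ha, fun j hj hj1 => by omega⟩

lemma pdEntry_append_singleton_ne_infE {U : List (Sig σ)} {x y : Sig σ} (hy : y ∈ U)
    (hyx : y ≤ x) : pdEntry (U ++ [x]) (U.length + 1) ≠ infE := by
  obtain ⟨k, hk, rfl⟩ := List.getElem_of_mem hy
  rw [ne_eq, pdEntry_eq_infE_iff]
  rintro ⟨-, hmin⟩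
  have hlt := hmin (k + 1) (by omega) (by omega)
  exact not_le.2 (by simpa [get1, getElem?_append_left hk, getElem?_eq_getElem hk] using hlt) hyx

lemma count_infE_pd (W : List (Sig σ)) :
    (pd W).count infE = (range W.length).countP fun k => pdEntry W (k + 1) == infE := by
  simp [pd, count_eq_countP, countP_map, Function.comp_def]

lemma count_infE_pd_append_singleton {U : List (Sig σ)} {x y : Sig σ} (hy : y ∈ U)
    (hyx : y ≤ x) : (pd (U ++ [x])).count infE = (pd U).count infE := by
  rw [count_infE_pd, count_infE_pd, length_append, length_singleton, range_succ, countP_append,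
    countP_singleton, if_neg (by simpa using pdEntry_append_singleton_ne_infE hy hyx), add_zero]
  refine countP_congr fun k hk => ?_
  simpa using pdEntry_append_eq_infE_iff [x] (mem_range.1 hk)

lemma pd_cons (a : Sig σ) (W : List (Sig σ)) :
    pd (a :: W) =
      pdEntry (a :: W) 1 :: (range W.length).map fun k => pdEntry (a :: W) (k + 2) := by
  simp [pd, range_succ_eq_map, Function.comp_def]

lemma count_infE_pd_cons {a : Sig σ} (ha : a ≠ ⊥) (W : List (Sig σ)) :
    (pd (a :: W)).count infE = ((pd (a :: W)).drop 1).count infE + 1 := by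
  rw [pd_cons, pdEntry_cons_one ha, count_cons_self, drop_one, tail_cons]

lemma count_infE_drop_one_pd_cons_le (a : Sig σ) (W : List (Sig σ)) :
    ((pd (a :: W)).drop 1).count infE ≤ (pd W).count infE := by
  rw [pd_cons, drop_one, tail_cons, count_eq_countP, countP_map, count_infE_pd]
  refine countP_mono_left fun k _ h => ?_
  simpa using pdEntry_cons_add_two_eq_infE (by simpa using h)

lemma count_infE_pd_bot_cons (W : List (Sig σ)) : (pd (⊥ :: W)).count infE = 0 := by
  rw [count_infE_pd, countP_eq_zero]
  intro k _ h
  obtain ⟨hne, hmin⟩ := (pdEntry_eq_infE_iff _ _).1 (by simpa using h)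
  rcases k with _ | k
  · exact hne (by simp [get1])
  · simpa [get1] using hmin 1 le_rfl (by omega)

lemma count_infE_pd_rotate_step {a : Sig σ} (ha : a ≠ ⊥) (t : List (Sig σ)) :
    (pd (t ++ [a])).count infE - ((pd (a :: (t ++ [a]))).drop 1).count infE
      + (pd (a :: t)).count infE = (pd (t ++ [a])).count infE + 1 := by
  have hlast : (pd (a :: t ++ [a])).count infE = (pd (a :: t)).count infE :=
    count_infE_pd_append_singleton mem_cons_self le_rfl
  have hhead := count_infE_pd_cons ha (t ++ [a])
  have hmono := count_infE_drop_one_pd_cons_le a (t ++ [a])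
  rw [cons_append] at hlast
  omega

lemma unbotD_rtsEntry_add_count_infE {V : List (Sig σ)} {k : ℕ} (hk : k < V.length)
    (hb : V[k] ≠ ⊥) : (rtsEntry V (k + 1)).unbotD 0 + (pd (V.rotate k)).count infE
      = (pd (V.rotate (k + 1))).count infE + 1 := by
  obtain ⟨t, hk0, hk1⟩ := rotate_eq_getElem_cons hk
  have hget : get1 V (k + 1) = V[k] := by simp [get1, getElem?_eq_getElem hk]
  rw [rtsEntry, if_neg (hget ▸ hb), WithBot.unbotD_natCast, Nat.cast_id, rot_eq_rotate, hget,
    hk0, hk1]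
  exact count_infE_pd_rotate_step hb t

lemma sum_rtsEntry_add_count_infE (V : List (Sig σ)) {m : ℕ} (hm : m ≤ V.idxOf ⊥) :
    ((range m).map fun k => (rtsEntry V (k + 1)).unbotD 0).sum + (pd V).count infE
      = (pd (V.rotate m)).count infE + m := by
  induction m with
  | zero => simp
  | succ m ih =>
    have hm' : m < V.idxOf ⊥ := hm
    have hstep := unbotD_rtsEntry_add_count_infE _ (getElem_ne_of_lt_idxOf hm')
    rw [range_succ, map_append, sum_append, map_singleton, sum_singleton]
    have hprev := ih hm'.le
    omega

lemma count_infE_pd_rotate_idxOf_bot_le (V : List (Sig σ)) :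
    (pd (V.rotate (V.idxOf ⊥))).count infE ≤ (pd V).count infE := by
  by_cases hmem : ⊥ ∈ V
  · have hlt := idxOf_lt_length_of_mem hmem
    obtain ⟨t, ht, -⟩ := rotate_eq_getElem_cons hlt
    rw [ht, getElem_idxOf hlt, count_infE_pd_bot_cons]
    exact Nat.zero_le _
  · rw [idxOf_eq_length hmem, rotate_length]

lemma take_rtsenc (V : List (Sig σ)) {m : ℕ} (hm : m ≤ V.length) :
    (rtsenc V).take m = (range m).map fun k => rtsEntry V (k + 1) := by
  rw [rtsenc, ← map_take, take_range, min_eq_left hm]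

end Encodings

theorem rtsenc_sum_le_general (σ : ℕ) (V : List (Sig σ)) (j : ℕ)
    (hj : j = if (⊥ : Sig σ) ∈ V then V.idxOf (⊥ : Sig σ) else V.length) :
    ((((rtsenc V).take j).map (fun c => WithBot.unbotD 0 c)).sum) ≤ V.length := by
  obtain rfl : j = V.idxOf ⊥ := by
    split_ifs at hj with hmem
    · exact hj
    · rw [hj, idxOf_eq_length hmem]
  rw [take_rtsenc V idxOf_le_length, map_map, Function.comp_def]
  have htelescope := sum_rtsEntry_add_count_infE V le_rfl
  have hlast := count_infE_pd_rotate_idxOf_bot_le V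
  calc _ ≤ V.idxOf ⊥ := by omega
    _ ≤ V.length := idxOf_le_length

/-- For nonempty `V` over `Σ_$`, with `j` one less than the
position of the first `$` in `V` (or `j = |V|` if `V` has no `$`), the sum of the
integer entries `rtsenc(V)[1] + ⋯ + rtsenc(V)[j]` is at most `|V|`. -/
theorem rtsenc_sum_le (σ : ℕ) (V : List (Sig σ)) (hV : V ≠ []) (j : ℕ)
    (hj : j = if (⊥ : Sig σ) ∈ V then V.idxOf (⊥ : Sig σ) else V.length) :
    ((((rtsenc V).take j).map (fun c => WithBot.unbotD 0 c)).sum) ≤ V.length :=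
  rtsenc_sum_le_general σ V j hj
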